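/- arXiv:2312.10497 — 5 statements merged into one kernel-verified Lean document; each statement's English description precedes it below -/
import Mathlib

section
/- Let μ₁ ≥ μ_M > 0 be reals, let B ∈ [0,∞], let b = (b₁, b₂) ∈ ℝ², and let z = (z₁, z₂) : [0,∞) → ℝ² be cadlag. Suppose (y₁, y₂, u₁, u₂) is a quadruple of cadlag real functions on [0,∞) with u₁, u₂ nonnegative and nondecreasing, satisfying y₁(t) = b₁ + z₁(t) − ∫₀ᵗ (μ_M·y₁(s) − μ₁·y₂(s)) ds − u₁(t), y₂(t) = b₂ + z₂(t) − ∫₀ᵗ μ₁·y₂(s) ds + u₁(t) − u₂(t), y₁(t) ≤ 0, 0 ≤ y₂(t) ≤ B for all t ≥ 0, together with the complementarity conditions ∫₀^∞ 1{y₁(t) < 0} du₁(t) = 0 and ∫₀^∞ 1{y₂(t) < B} du₂(t) = 0. Then for every t ≥ 0, with m = max(|b₁|, |b₂|) + max(‖z₁‖_t, ‖z₂‖_t), one has ‖y₁‖_t ≤ 4m·e^{6μ₁t} and ‖y₂‖_t ≤ 8m·e^{6μ₁t}. -/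
open MeasureTheory

/-- A function on `[0,∞)` (encoded as a function on `ℝ`) is cadlag: right
continuous at every `t ≥ 0` and possessing left limits at every `t > 0`. -/
def CadlagOn {E : Type*} [TopologicalSpace E] (f : ℝ → E) : Prop :=
  (∀ t : ℝ, 0 ≤ t → ContinuousWithinAt f (Set.Ici t) t) ∧
  (∀ t : ℝ, 0 < t → ∃ l : E, Filter.Tendsto f (nhdsWithin t (Set.Iio t)) (nhds l))

/-- The Lebesgue–Stieltjes measure of the extension of `u` by `0` on `(-∞,0)`,
so that a jump of `u` at time `0` contributes an atom at `0`.  (If the extension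
fails to be monotone right-continuous, the junk value `0` is returned.) -/
noncomputable def lsMeasure (u : ℝ → ℝ) : Measure ℝ := by
  classical
  exact
    if h : Monotone (fun t : ℝ => if t < 0 then 0 else u t) ∧
        ∀ x : ℝ, ContinuousWithinAt (fun t : ℝ => if t < 0 then 0 else u t)
          (Set.Ici x) x then
      StieltjesFunction.measure ⟨fun t : ℝ => if t < 0 then 0 else u t, h.1, h.2⟩
    else 0

/-- `(y₁, y₂, u₁, u₂)` solves the two-dimensional reflected integral equations
with upper barrier `B ∈ [0,∞]`. -/
def IsReflectedSolution (μ₁ μM : ℝ) (B : ENNReal) (b₁ b₂ : ℝ)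
    (z₁ z₂ y₁ y₂ u₁ u₂ : ℝ → ℝ) : Prop :=
  CadlagOn y₁ ∧ CadlagOn y₂ ∧ CadlagOn u₁ ∧ CadlagOn u₂ ∧
  (∀ t, 0 ≤ t → 0 ≤ u₁ t) ∧ (∀ t, 0 ≤ t → 0 ≤ u₂ t) ∧
  MonotoneOn u₁ (Set.Ici 0) ∧ MonotoneOn u₂ (Set.Ici 0) ∧
  (∀ t, 0 ≤ t →
    y₁ t = b₁ + z₁ t - (∫ s in (0:ℝ)..t, (μM * y₁ s - μ₁ * y₂ s)) - u₁ t) ∧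
  (∀ t, 0 ≤ t →
    y₂ t = b₂ + z₂ t - (∫ s in (0:ℝ)..t, μ₁ * y₂ s) + u₁ t - u₂ t) ∧
  (∀ t, 0 ≤ t → y₁ t ≤ 0 ∧ 0 ≤ y₂ t ∧ ENNReal.ofReal (y₂ t) ≤ B) ∧
  lsMeasure u₁ {t : ℝ | 0 ≤ t ∧ y₁ t < 0} = 0 ∧
  lsMeasure u₂ {t : ℝ | 0 ≤ t ∧ ENNReal.ofReal (y₂ t) < B} = 0

/-- Uniform norm `‖f‖_t = sup_{0 ≤ s ≤ t} |f s|`. -/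
noncomputable def unifNorm (t : ℝ) (f : ℝ → ℝ) : ℝ :=
  sSup ((fun s => |f s|) '' Set.Icc (0:ℝ) t)


section Helpers
open Set Filter

lemma cadlag_bounded {f : ℝ → ℝ} (hf : CadlagOn f) {T : ℝ} (hT : 0 ≤ T) :
    ∃ C, ∀ s ∈ Set.Icc (0:ℝ) T, |f s| ≤ C := by
  set A : Set ℝ := {s | s ∈ Set.Icc (0:ℝ) T ∧ ∃ C, ∀ r ∈ Set.Icc (0:ℝ) s, |f r| ≤ C} with hA
  have h0A : (0:ℝ) ∈ A := by
    refine ⟨⟨le_refl 0, hT⟩, |f 0|, ?_⟩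
    rintro r ⟨h1, h2⟩
    rw [le_antisymm h2 h1]
  have hAne : A.Nonempty := ⟨0, h0A⟩
  have hAbdd : BddAbove A := ⟨T, fun s hs => hs.1.2⟩
  set c := sSup A with hc
  have hc0 : 0 ≤ c := le_csSup hAbdd h0A
  have hcT : c ≤ T := csSup_le hAne (fun s hs => hs.1.2)
  have hcA : c ∈ A := by
    rcases eq_or_lt_of_le hc0 with h | h
    · rw [← h]; exact h0A
    · obtain ⟨l, hl⟩ := hf.2 c h
      have hmem : f ⁻¹' Metric.ball l 1 ∈ nhdsWithin c (Set.Iio c) :=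
        hl (Metric.ball_mem_nhds l one_pos)
      rw [mem_nhdsLT_iff_exists_Ioo_subset] at hmem
      obtain ⟨a, ha, hsub⟩ := hmem
      have hmax : max a 0 < c := max_lt ha h
      obtain ⟨s₀, hs₀A, hs₀⟩ := exists_lt_of_lt_csSup hAne hmax
      obtain ⟨⟨hs₀0, hs₀T⟩, C, hC⟩ := hs₀A
      refine ⟨⟨hc0, hcT⟩, max C (max (|l| + 1) |f c|), ?_⟩
      rintro r ⟨hr0, hrc⟩
      rcases le_or_gt r s₀ with hr | hr
      · exact le_trans (hC r ⟨hr0, hr⟩) (le_max_left _ _)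
      · rcases eq_or_lt_of_le hrc with hrc' | hrc'
        · rw [hrc']
          exact le_trans (le_max_right (|l|+1) _) (le_max_right C _)
        · have : f r ∈ Metric.ball l 1 := hsub ⟨lt_trans (lt_of_le_of_lt (le_max_left a 0) hs₀) hr, hrc'⟩
          rw [Metric.mem_ball, Real.dist_eq] at this
          have : |f r| ≤ |l| + 1 := by
            have := abs_sub_abs_le_abs_sub (f r) l
            linarith
          exact le_trans this (le_trans (le_max_left _ _) (le_max_right _ _))
  have hcT' : c = T := by
    by_contra hne
    have hcltT : c < T := lt_of_le_of_ne hcT hne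
    have hrc := hf.1 c hc0
    have hmem : f ⁻¹' Metric.ball (f c) 1 ∈ nhdsWithin c (Set.Ici c) :=
      hrc (Metric.ball_mem_nhds (f c) one_pos)
    rw [mem_nhdsGE_iff_exists_Ico_subset] at hmem
    obtain ⟨b, hb, hsub⟩ := hmem
    set s₁ := min ((c + b) / 2) T with hs₁
    have hbc : c < b := hb
    have hcs₁ : c < s₁ := lt_min (by linarith) hcltT
    have hs₁T : s₁ ≤ T := min_le_right _ _
    have hs₁b : s₁ < b := lt_of_le_of_lt (min_le_left _ _) (by linarith)
    obtain ⟨⟨_, _⟩, C, hC⟩ := hcA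
    have hs₁A : s₁ ∈ A := by
      refine ⟨⟨le_trans hc0 (le_of_lt hcs₁), hs₁T⟩, max C (|f c| + 1), ?_⟩
      rintro r ⟨hr0, hrs₁⟩
      rcases le_or_gt r c with hr | hr
      · exact le_trans (hC r ⟨hr0, hr⟩) (le_max_left _ _)
      · have : f r ∈ Metric.ball (f c) 1 := hsub ⟨le_of_lt hr, lt_of_le_of_lt hrs₁ hs₁b⟩
        rw [Metric.mem_ball, Real.dist_eq] at this
        have h2 : |f r| ≤ |f c| + 1 := by
          have := abs_sub_abs_le_abs_sub (f r) (f c)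
          linarith
        exact le_trans h2 (le_max_right _ _)
    exact absurd (le_csSup hAbdd hs₁A) (not_le.2 hcs₁)
  obtain ⟨_, C, hC⟩ := hcA
  exact ⟨C, fun s hs => hC s ⟨hs.1, hcT' ▸ hs.2⟩⟩

lemma unifNorm_bddAbove {f : ℝ → ℝ} {t : ℝ} (hb : ∃ C, ∀ s ∈ Set.Icc (0:ℝ) t, |f s| ≤ C) :
    BddAbove ((fun s => |f s|) '' Set.Icc (0:ℝ) t) := by
  obtain ⟨C, hC⟩ := hb
  exact ⟨C, by rintro x ⟨s, hs, rfl⟩; exact hC s hs⟩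

lemma le_unifNorm {f : ℝ → ℝ} {t s : ℝ} (hb : ∃ C, ∀ r ∈ Set.Icc (0:ℝ) t, |f r| ≤ C)
    (hs : s ∈ Set.Icc (0:ℝ) t) : |f s| ≤ unifNorm t f :=
  le_csSup (unifNorm_bddAbove hb) ⟨s, hs, rfl⟩

lemma unifNorm_le {f : ℝ → ℝ} {t C : ℝ} (ht : 0 ≤ t)
    (hC : ∀ s ∈ Set.Icc (0:ℝ) t, |f s| ≤ C) : unifNorm t f ≤ C :=
  csSup_le (⟨|f 0|, 0, ⟨le_refl 0, ht⟩, rfl⟩) (by rintro x ⟨s, hs, rfl⟩; exact hC s hs)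

lemma unifNorm_nonneg (f : ℝ → ℝ) {t : ℝ} (ht : 0 ≤ t) : 0 ≤ unifNorm t f := by
  by_cases hb : BddAbove ((fun s => |f s|) '' Set.Icc (0:ℝ) t)
  · exact le_trans (abs_nonneg (f 0)) (le_csSup hb ⟨0, ⟨le_refl 0, ht⟩, rfl⟩)
  · unfold unifNorm
    rw [Real.sSup_of_not_bddAbove hb]

lemma unifNorm_mono {f : ℝ → ℝ} {a b : ℝ} (ha : 0 ≤ a) (hab : a ≤ b)
    (hb : ∃ C, ∀ s ∈ Set.Icc (0:ℝ) b, |f s| ≤ C) : unifNorm a f ≤ unifNorm b f :=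
  csSup_le_csSup (unifNorm_bddAbove hb) ⟨|f 0|, 0, ⟨le_refl 0, ha⟩, rfl⟩
    (Set.image_mono (Set.Icc_subset_Icc le_rfl hab))

lemma lsMeasure_eq {u : ℝ → ℝ}
    (hrc : ∀ x, 0 ≤ x → ContinuousWithinAt u (Set.Ici x) x)
    (hnn : ∀ s, 0 ≤ s → 0 ≤ u s) (hmono : MonotoneOn u (Set.Ici 0)) :
    ∃ sf : StieltjesFunction ℝ,
      (∀ s, sf s = if s < 0 then 0 else u s) ∧ lsMeasure u = sf.measure := by
  set ext : ℝ → ℝ := fun t => if t < 0 then 0 else u t with hext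
  have hm : Monotone ext := by
    intro s t hst
    simp only [hext]
    split_ifs with h1 h2 h2
    · exact le_refl 0
    · exact hnn t (not_lt.1 h2)
    · exact absurd (lt_of_le_of_lt hst h2) (not_lt.2 (not_lt.1 h1))
    · exact hmono (not_lt.1 h1) (not_lt.1 h2) hst
  have hcont : ∀ x : ℝ, ContinuousWithinAt ext (Set.Ici x) x := by
    intro x
    rcases lt_or_ge x 0 with hx | hx
    · have : ext =ᶠ[nhds x] (fun _ => (0:ℝ)) := by
        filter_upwards [IsOpen.mem_nhds isOpen_Iio hx] with y hy
        exact if_pos hy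
      exact (continuousWithinAt_const.congr_of_eventuallyEq
        (nhdsWithin_le_nhds this) (by simp [hext, if_pos hx]))
    · refine (hrc x hx).congr (fun y hy => ?_) ?_
      · simp only [hext, if_neg (not_lt.2 (le_trans hx hy))]
      · simp only [hext, if_neg (not_lt.2 hx)]
  refine ⟨⟨ext, hm, hcont⟩, fun s => rfl, ?_⟩
  unfold lsMeasure
  rw [dif_pos ⟨hm, hcont⟩]

lemma refl_bound {u y x : ℝ → ℝ}
    (hrc : ∀ r, 0 ≤ r → ContinuousWithinAt u (Set.Ici r) r)
    (hnn : ∀ s, 0 ≤ s → 0 ≤ u s) (hmono : MonotoneOn u (Set.Ici 0))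
    (hcomp : lsMeasure u {s : ℝ | 0 ≤ s ∧ y s < 0} = 0)
    (hy : ∀ s, 0 ≤ s → y s = x s - u s)
    {t S : ℝ} (ht : 0 ≤ t) (hS0 : 0 ≤ S) (hxS : ∀ s, 0 ≤ s → s ≤ t → x s ≤ S) :
    u t ≤ S := by
  obtain ⟨sf, hsf, hls⟩ := lsMeasure_eq hrc hnn hmono
  by_contra hcon
  push_neg at hcon
  set E : Set ℝ := {s | s ∈ Set.Icc 0 t ∧ S < u s} with hE
  have htE : t ∈ E := ⟨⟨ht, le_refl t⟩, hcon⟩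
  have hEne : E.Nonempty := ⟨t, htE⟩
  have hEbdd : BddBelow E := ⟨0, fun s hs => hs.1.1⟩
  set τ := sInf E with hτ
  have hτ0 : 0 ≤ τ := le_csInf hEne (fun s hs => hs.1.1)
  have hτt : τ ≤ t := csInf_le hEbdd htE
  have hlt : ∀ s, 0 ≤ s → s < τ → u s ≤ S := by
    intro s hs hsτ
    by_contra hs'
    push_neg at hs'
    exact absurd (csInf_le hEbdd ⟨⟨hs, le_trans (le_of_lt hsτ) hτt⟩, hs'⟩) (not_le.2 hsτ)
  have hgt : ∀ s, τ < s → s ≤ t → S < u s := by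
    intro s hτs hst
    obtain ⟨s', hs'E, hs's⟩ := (csInf_lt_iff hEbdd hEne).1 hτs
    exact lt_of_lt_of_le hs'E.2 (hmono hs'E.1.1 (le_trans hs'E.1.1 (le_of_lt hs's)) (le_of_lt hs's))
  -- the null set
  have hnull : ∀ A : Set ℝ, A ⊆ {s : ℝ | 0 ≤ s ∧ y s < 0} → sf.measure A = 0 := by
    intro A hA
    exact measure_mono_null hA (hls ▸ hcomp)
  rcases le_or_gt (u τ) S with hτS | hτS
  · -- measure of Ioc τ t positive
    have hτt' : τ < t := by
      rcases eq_or_lt_of_le hτt with h | h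
      · exact absurd (h ▸ hcon) (not_lt.2 (h ▸ hτS))
      · exact h
    have hsub : Set.Ioc τ t ⊆ {s : ℝ | 0 ≤ s ∧ y s < 0} := by
      rintro s ⟨h1, h2⟩
      have hs0 : 0 ≤ s := le_trans hτ0 (le_of_lt h1)
      refine ⟨hs0, ?_⟩
      rw [hy s hs0]
      have := hgt s h1 h2
      have := hxS s hs0 h2
      linarith
    have := hnull _ hsub
    rw [StieltjesFunction.measure_Ioc, hsf, hsf, if_neg (not_lt.2 hτ0),
      if_neg (not_lt.2 (le_trans hτ0 hτt))] at this
    rw [ENNReal.ofReal_eq_zero] at this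
    linarith
  · -- atom at τ
    have hyτ : y τ < 0 := by
      rw [hy τ hτ0]
      have := hxS τ hτ0 hτt
      linarith
    have hsub : {τ} ⊆ {s : ℝ | 0 ≤ s ∧ y s < 0} := by
      rintro s rfl; exact ⟨hτ0, hyτ⟩
    have hmeas := hnull _ hsub
    rw [StieltjesFunction.measure_singleton, ENNReal.ofReal_eq_zero] at hmeas
    -- leftLim sf τ ≤ S
    have hll : Function.leftLim sf τ ≤ S := by
      refine le_of_tendsto (sf.mono.tendsto_leftLim τ) ?_
      filter_upwards [self_mem_nhdsWithin] with s hs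
      rw [hsf]
      split_ifs with h
      · exact hS0
      · exact hlt s (not_lt.1 h) hs
    rw [hsf, if_neg (not_lt.2 hτ0)] at hmeas
    linarith

lemma abs_intervalIntegral_le {g h : ℝ → ℝ} {r : ℝ} (hr : 0 ≤ r)
    (hh : IntervalIntegrable h volume 0 r)
    (hnn : ∀ s ∈ Set.Icc (0:ℝ) r, 0 ≤ h s)
    (hpt : ∀ s ∈ Set.Icc (0:ℝ) r, |g s| ≤ h s) :
    |∫ s in (0:ℝ)..r, g s| ≤ ∫ s in (0:ℝ)..r, h s := by
  by_cases hg : IntervalIntegrable g volume 0 r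
  · calc |∫ s in (0:ℝ)..r, g s| ≤ ∫ s in (0:ℝ)..r, |g s| := by
          simpa [Real.norm_eq_abs] using
            intervalIntegral.norm_integral_le_integral_norm (μ := volume) (f := g) hr
    _ ≤ ∫ s in (0:ℝ)..r, h s := by
          refine intervalIntegral.integral_mono_on hr ?_ hh hpt
          simpa [Real.norm_eq_abs] using hg.norm
  · rw [intervalIntegral.integral_undef hg, abs_zero]
    exact intervalIntegral.integral_nonneg hr hnn

lemma gronwall_mono {F : ℝ → ℝ} (hF : Monotone F) {a c T : ℝ} (ha : 0 ≤ a) (hc : 0 ≤ c)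
    (hT : 0 ≤ T) (hF0 : 0 ≤ F 0)
    (h : ∀ s, 0 ≤ s → s ≤ T → F s ≤ a + c * ∫ r in (0:ℝ)..s, F r) :
    F T ≤ a * Real.exp (c * T) := by
  have hFT : 0 ≤ F T := le_trans hF0 (hF hT)
  have hFint : ∀ s : ℝ, IntervalIntegrable F volume 0 s :=
    fun s => (hF.monotoneOn _).intervalIntegrable
  have h1 : ∀ (C : ℝ) (k : ℕ) (s : ℝ),
      (∫ r in (0:ℝ)..s, C * r ^ k) = C * (s ^ (k+1) / ((k:ℝ)+1)) := by
    intro C k s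
    rw [intervalIntegral.integral_const_mul, integral_pow]
    norm_num
  have key : ∀ n : ℕ, ∀ s, 0 ≤ s → s ≤ T →
      F s ≤ a * (∑ k ∈ Finset.range n, c ^ k / (k.factorial : ℝ) * s ^ k)
        + c ^ n / (n.factorial : ℝ) * F T * s ^ n := by
    intro n
    induction n with
    | zero =>
      intro s hs0 hsT
      simpa using hF hsT
    | succ n ih =>
      intro s hs0 hsT
      set Bnd : ℝ → ℝ := fun r =>
        a * (∑ k ∈ Finset.range n, c ^ k / (k.factorial : ℝ) * r ^ k)
          + c ^ n / (n.factorial : ℝ) * F T * r ^ n with hBnd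
      have hc1 : Continuous fun r : ℝ =>
          a * (∑ k ∈ Finset.range n, c ^ k / (k.factorial : ℝ) * r ^ k) :=
        continuous_const.mul (continuous_finset_sum _
          (fun k _ => continuous_const.mul (continuous_pow k)))
      have hc2 : Continuous fun r : ℝ => c ^ n / (n.factorial : ℝ) * F T * r ^ n :=
        continuous_const.mul (continuous_pow n)
      have hmono_int : (∫ r in (0:ℝ)..s, F r) ≤ ∫ r in (0:ℝ)..s, Bnd r := by
        refine intervalIntegral.integral_mono_on hs0 (hFint s)
          ((hc1.add hc2).intervalIntegrable 0 s) ?_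
        intro r hr
        exact ih r hr.1 (le_trans hr.2 hsT)
      have hsum : (∫ r in (0:ℝ)..s, ∑ k ∈ Finset.range n, c ^ k / (k.factorial : ℝ) * r ^ k)
          = ∑ k ∈ Finset.range n, c ^ k / (k.factorial : ℝ) * (s ^ (k+1) / ((k:ℝ)+1)) := by
        rw [intervalIntegral.integral_finset_sum]
        · exact Finset.sum_congr rfl fun k _ => h1 _ _ _
        · intro k _
          exact (continuous_const.mul (continuous_pow k)).intervalIntegrable 0 s
      have hint : (∫ r in (0:ℝ)..s, Bnd r)
          = a * (∑ k ∈ Finset.range n, c ^ k / (k.factorial : ℝ) * (s ^ (k+1) / ((k:ℝ)+1)))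
            + c ^ n / (n.factorial : ℝ) * F T * (s ^ (n+1) / ((n:ℝ)+1)) := by
        rw [hBnd]
        rw [intervalIntegral.integral_add (hc1.intervalIntegrable 0 s)
          (hc2.intervalIntegrable 0 s), intervalIntegral.integral_const_mul, hsum, h1]
      have hterm : ∀ k : ℕ, c * (c ^ k / (k.factorial : ℝ) * (s ^ (k+1) / ((k:ℝ)+1)))
          = c ^ (k+1) / ((k+1).factorial : ℝ) * s ^ (k+1) := by
        intro k
        have hk : ((k.factorial : ℝ)) ≠ 0 := Nat.cast_ne_zero.2 k.factorial_ne_zero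
        have hk1 : ((k:ℝ)+1) ≠ 0 := by positivity
        rw [Nat.factorial_succ]
        push_cast
        field_simp
        ring
      have hL : c * (∑ k ∈ Finset.range n, c ^ k / (k.factorial : ℝ) * (s ^ (k+1) / ((k:ℝ)+1)))
          = ∑ k ∈ Finset.range n, c ^ (k+1) / ((k+1).factorial : ℝ) * s ^ (k+1) := by
        rw [Finset.mul_sum]
        exact Finset.sum_congr rfl fun k _ => hterm k
      have hterm2 : c * (c ^ n / (n.factorial : ℝ) * F T * (s ^ (n+1) / ((n:ℝ)+1)))
          = c ^ (n+1) / ((n+1).factorial : ℝ) * F T * s ^ (n+1) := by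
        have hk : ((n.factorial : ℝ)) ≠ 0 := Nat.cast_ne_zero.2 n.factorial_ne_zero
        have hk1 : ((n:ℝ)+1) ≠ 0 := by positivity
        rw [Nat.factorial_succ]
        push_cast
        field_simp
        ring
      calc F s ≤ a + c * ∫ r in (0:ℝ)..s, F r := h s hs0 hsT
        _ ≤ a + c * ∫ r in (0:ℝ)..s, Bnd r := by
            exact add_le_add_right (mul_le_mul_of_nonneg_left hmono_int hc) a
        _ = a * (∑ k ∈ Finset.range (n+1), c ^ k / (k.factorial : ℝ) * s ^ k)
            + c ^ (n+1) / ((n+1).factorial : ℝ) * F T * s ^ (n+1) := by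
            rw [hint, Finset.sum_range_succ', ← hL, ← hterm2]
            simp only [pow_zero, Nat.factorial_zero, Nat.cast_one, div_one, one_mul, mul_one]
            ring
  have hfin : ∀ n : ℕ, F T ≤ a * Real.exp (c * T) + (c*T) ^ n / (n.factorial : ℝ) * F T := by
    intro n
    have hkey := key n T hT le_rfl
    have hsum_le : (∑ k ∈ Finset.range n, c ^ k / (k.factorial : ℝ) * T ^ k)
        ≤ Real.exp (c * T) := by
      have h2 : ∀ k ∈ Finset.range n, c ^ k / (k.factorial : ℝ) * T ^ k
          = (c*T) ^ k / (k.factorial : ℝ) := fun k _ => by rw [mul_pow]; ring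
      rw [Finset.sum_congr rfl h2]
      exact Real.sum_le_exp_of_nonneg (by positivity) n
    have h3 : c ^ n / (n.factorial : ℝ) * F T * T ^ n
        = (c*T) ^ n / (n.factorial : ℝ) * F T := by rw [mul_pow]; ring
    calc F T ≤ a * (∑ k ∈ Finset.range n, c ^ k / (k.factorial : ℝ) * T ^ k)
          + c ^ n / (n.factorial : ℝ) * F T * T ^ n := hkey
      _ ≤ a * Real.exp (c * T) + (c*T) ^ n / (n.factorial : ℝ) * F T := by
          rw [h3]
          exact add_le_add_left (mul_le_mul_of_nonneg_left hsum_le ha) _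
  have hlim : Filter.Tendsto
      (fun n : ℕ => a * Real.exp (c * T) + (c*T) ^ n / (n.factorial : ℝ) * F T)
      Filter.atTop (nhds (a * Real.exp (c * T))) := by
    have := (FloorSemiring.tendsto_pow_div_factorial_atTop (K := ℝ) (c*T)).mul_const (F T)
    simpa using Filter.Tendsto.const_add (a * Real.exp (c * T)) this
  exact ge_of_tendsto' hlim hfin
end Helpers

/-- Stochastic-boundedness bound for the reflected system (Lemma 5 / Appendix B
of the paper): any solution of the reflected equations satisfies
`‖y₁‖_t ≤ 4 m e^{6 μ₁ t}` and `‖y₂‖_t ≤ 8 m e^{6 μ₁ t}` where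
`m = max(|b₁|,|b₂|) + max(‖z₁‖_t, ‖z₂‖_t)`. -/
theorem reflected_system_bound
    (μ₁ μM : ℝ) (hμ : μM ≤ μ₁) (hμM : 0 < μM)
    (B : ENNReal) (b₁ b₂ : ℝ) (z₁ z₂ y₁ y₂ u₁ u₂ : ℝ → ℝ)
    (hz : CadlagOn (fun t => (z₁ t, z₂ t)))
    (hsol : IsReflectedSolution μ₁ μM B b₁ b₂ z₁ z₂ y₁ y₂ u₁ u₂) :
    ∀ t, 0 ≤ t →
      unifNorm t y₁ ≤
        4 * (max |b₁| |b₂| + max (unifNorm t z₁) (unifNorm t z₂)) *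
          Real.exp (6 * μ₁ * t) ∧
      unifNorm t y₂ ≤
        8 * (max |b₁| |b₂| + max (unifNorm t z₁) (unifNorm t z₂)) *
          Real.exp (6 * μ₁ * t) := by
  obtain ⟨hy1c, hy2c, hu1c, hu2c, hu1nn, hu2nn, hu1m, hu2m, heq1, heq2, hconstr,
    hcomp1, hcomp2⟩ := hsol
  intro t ht
  have hμ₁ : (0:ℝ) < μ₁ := lt_of_lt_of_le hμM hμ
  have hz1c : CadlagOn z₁ := ⟨fun x hx => (hz.1 x hx).fst,
    fun x hx => (hz.2 x hx).elim fun l hl => ⟨l.1, (continuous_fst.tendsto l).comp hl⟩⟩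
  have hz2c : CadlagOn z₂ := ⟨fun x hx => (hz.1 x hx).snd,
    fun x hx => (hz.2 x hx).elim fun l hl => ⟨l.2, (continuous_snd.tendsto l).comp hl⟩⟩
  set m := max |b₁| |b₂| + max (unifNorm t z₁) (unifNorm t z₂) with hm
  have hm0 : 0 ≤ m := add_nonneg (le_trans (abs_nonneg b₁) (le_max_left _ _))
    (le_trans (unifNorm_nonneg z₁ ht) (le_max_left _ _))
  set F : ℝ → ℝ := fun s => unifNorm (max s 0) y₁ + unifNorm (max s 0) y₂ with hFdef
  have hFmono : Monotone F := by
    intro s1 s2 h12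
    have h1 : (0:ℝ) ≤ max s1 0 := le_max_right _ _
    have h2 : max s1 0 ≤ max s2 0 := max_le_max h12 le_rfl
    exact add_le_add (unifNorm_mono h1 h2 (cadlag_bounded hy1c (le_trans h1 h2)))
      (unifNorm_mono h1 h2 (cadlag_bounded hy2c (le_trans h1 h2)))
  have hFnn : ∀ s, 0 ≤ F s := fun s => add_nonneg
    (unifNorm_nonneg _ (le_max_right _ _)) (unifNorm_nonneg _ (le_max_right _ _))
  have habs : ∀ s, 0 ≤ s → |y₁ s| + |y₂ s| ≤ F s := by
    intro s hs
    have hmx : max s 0 = s := max_eq_left hs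
    simp only [hFdef, hmx]
    exact add_le_add (le_unifNorm (cadlag_bounded hy1c hs) ⟨hs, le_rfl⟩)
      (le_unifNorm (cadlag_bounded hy2c hs) ⟨hs, le_rfl⟩)
  have hFint : ∀ s1 s2 : ℝ, IntervalIntegrable F volume s1 s2 :=
    fun s1 s2 => (hFmono.monotoneOn _).intervalIntegrable
  set I : ℝ → ℝ := fun s => ∫ r in (0:ℝ)..s, F r with hIdef
  have hInn : ∀ s, 0 ≤ s → 0 ≤ I s := fun s hs =>
    intervalIntegral.integral_nonneg hs (fun r _ => hFnn r)
  have hImono : ∀ s1 s2, 0 ≤ s1 → s1 ≤ s2 → I s1 ≤ I s2 := by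
    intro s1 s2 h0 h12
    have hadj : (∫ r in (0:ℝ)..s1, F r) + ∫ r in s1..s2, F r = ∫ r in (0:ℝ)..s2, F r :=
      intervalIntegral.integral_add_adjacent_intervals (hFint 0 s1) (hFint s1 s2)
    have hpos : 0 ≤ ∫ r in s1..s2, F r :=
      intervalIntegral.integral_nonneg h12 (fun r _ => hFnn r)
    simp only [hIdef]
    linarith
  -- integral bounds
  have hib1 : ∀ s, 0 ≤ s →
      |∫ r in (0:ℝ)..s, (μM * y₁ r - μ₁ * y₂ r)| ≤ μ₁ * I s := by
    intro s hs
    have h := abs_intervalIntegral_le (g := fun r => μM * y₁ r - μ₁ * y₂ r)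
      (h := fun r => μ₁ * F r) hs ((hFint 0 s).const_mul μ₁)
      (fun r _ => mul_nonneg hμ₁.le (hFnn r)) ?_
    · simp only [hIdef]
      rw [← intervalIntegral.integral_const_mul]
      exact h
    · intro r hr
      show |μM * y₁ r - μ₁ * y₂ r| ≤ μ₁ * F r
      have hy := habs r hr.1
      have h1 : |μM * y₁ r - μ₁ * y₂ r| ≤ |μM * y₁ r| + |μ₁ * y₂ r| := abs_sub _ _
      rw [abs_mul, abs_mul, abs_of_pos hμM, abs_of_pos hμ₁] at h1
      nlinarith [abs_nonneg (y₁ r), abs_nonneg (y₂ r)]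
  have hib2 : ∀ s, 0 ≤ s → |∫ r in (0:ℝ)..s, μ₁ * y₂ r| ≤ μ₁ * I s := by
    intro s hs
    have h := abs_intervalIntegral_le (g := fun r => μ₁ * y₂ r)
      (h := fun r => μ₁ * F r) hs ((hFint 0 s).const_mul μ₁)
      (fun r _ => mul_nonneg hμ₁.le (hFnn r)) ?_
    · simp only [hIdef]
      rw [← intervalIntegral.integral_const_mul]
      exact h
    · intro r hr
      show |μ₁ * y₂ r| ≤ μ₁ * F r
      have hy := habs r hr.1
      rw [abs_mul, abs_of_pos hμ₁]
      nlinarith [abs_nonneg (y₁ r)]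
  set x₁ : ℝ → ℝ := fun s => b₁ + z₁ s - ∫ r in (0:ℝ)..s, (μM * y₁ r - μ₁ * y₂ r) with hx₁def
  have habs_x1 : ∀ s, 0 ≤ s → s ≤ t → |x₁ s| ≤ m + μ₁ * I s := by
    intro s hs0 hst
    have h1 : |x₁ s| ≤ |b₁| + |z₁ s| + |∫ r in (0:ℝ)..s, (μM * y₁ r - μ₁ * y₂ r)| := by
      calc |x₁ s| ≤ |b₁ + z₁ s| + |∫ r in (0:ℝ)..s, (μM * y₁ r - μ₁ * y₂ r)| := abs_sub _ _
        _ ≤ |b₁| + |z₁ s| + _ := add_le_add_left (abs_add_le _ _) _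
    have h2 : |z₁ s| ≤ unifNorm t z₁ := le_unifNorm (cadlag_bounded hz1c ht) ⟨hs0, hst⟩
    have h3 := hib1 s hs0
    have h4 : |b₁| ≤ max |b₁| |b₂| := le_max_left _ _
    have h5 : unifNorm t z₁ ≤ max (unifNorm t z₁) (unifNorm t z₂) := le_max_left _ _
    simp only [hm]
    linarith
  have hu1b : ∀ s, 0 ≤ s → s ≤ t → u₁ s ≤ m + μ₁ * I s := by
    intro s hs0 hst
    refine refl_bound (x := x₁) hu1c.1 hu1nn hu1m hcomp1 (fun r hr => ?_) hs0
      (add_nonneg hm0 (mul_nonneg hμ₁.le (hInn s hs0))) (fun r hr0 hrs => ?_)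
    · simp only [hx₁def]
      exact heq1 r hr
    · have h1 := habs_x1 r hr0 (le_trans hrs hst)
      have h2 := hImono r s hr0 hrs
      have h3 : μ₁ * I r ≤ μ₁ * I s := mul_le_mul_of_nonneg_left h2 hμ₁.le
      have h4 : x₁ r ≤ |x₁ r| := le_abs_self _
      linarith
  have hy1b : ∀ s, 0 ≤ s → s ≤ t → |y₁ s| ≤ 2 * (m + μ₁ * I s) := by
    intro s hs0 hst
    have heq : y₁ s = x₁ s - u₁ s := heq1 s hs0
    have h1 : |y₁ s| ≤ |x₁ s| + u₁ s := by
      rw [heq]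
      calc |x₁ s - u₁ s| ≤ |x₁ s| + |u₁ s| := abs_sub _ _
        _ = |x₁ s| + u₁ s := by rw [abs_of_nonneg (hu1nn s hs0)]
    have h2 := habs_x1 s hs0 hst
    have h3 := hu1b s hs0 hst
    linarith
  have hy2b : ∀ s, 0 ≤ s → s ≤ t → |y₂ s| ≤ 2 * (m + μ₁ * I s) := by
    intro s hs0 hst
    rw [abs_of_nonneg (hconstr s hs0).2.1]
    have heq : y₂ s = b₂ + z₂ s - (∫ r in (0:ℝ)..s, μ₁ * y₂ r) + u₁ s - u₂ s := heq2 s hs0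
    have h2 : |z₂ s| ≤ unifNorm t z₂ := le_unifNorm (cadlag_bounded hz2c ht) ⟨hs0, hst⟩
    have h3 := hib2 s hs0
    have h4 : b₂ ≤ max |b₁| |b₂| := le_trans (le_abs_self _) (le_max_right _ _)
    have h5 : unifNorm t z₂ ≤ max (unifNorm t z₁) (unifNorm t z₂) := le_max_right _ _
    have h6 := hu1b s hs0 hst
    have h7 := hu2nn s hs0
    have h8 : z₂ s ≤ |z₂ s| := le_abs_self _
    have h9 : -(∫ r in (0:ℝ)..s, μ₁ * y₂ r) ≤ |∫ r in (0:ℝ)..s, μ₁ * y₂ r| := neg_le_abs _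
    rw [heq]
    simp only [hm] at h6 ⊢
    linarith
  have hF_ineq : ∀ s, 0 ≤ s → s ≤ t → F s ≤ 4 * m + 4 * μ₁ * ∫ r in (0:ℝ)..s, F r := by
    intro s hs0 hst
    have hmx : max s 0 = s := max_eq_left hs0
    have hbd : ∀ r ∈ Set.Icc (0:ℝ) s, |y₁ r| ≤ 2 * (m + μ₁ * I s) := by
      intro r hr
      have h1 := hy1b r hr.1 (le_trans hr.2 hst)
      have h3 : μ₁ * I r ≤ μ₁ * I s :=
        mul_le_mul_of_nonneg_left (hImono r s hr.1 hr.2) hμ₁.le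
      linarith
    have hbd2 : ∀ r ∈ Set.Icc (0:ℝ) s, |y₂ r| ≤ 2 * (m + μ₁ * I s) := by
      intro r hr
      have h1 := hy2b r hr.1 (le_trans hr.2 hst)
      have h3 : μ₁ * I r ≤ μ₁ * I s :=
        mul_le_mul_of_nonneg_left (hImono r s hr.1 hr.2) hμ₁.le
      linarith
    have hn1 : unifNorm s y₁ ≤ 2 * (m + μ₁ * I s) := unifNorm_le hs0 hbd
    have hn2 : unifNorm s y₂ ≤ 2 * (m + μ₁ * I s) := unifNorm_le hs0 hbd2
    have hFs : F s = unifNorm s y₁ + unifNorm s y₂ := by simp only [hFdef, hmx]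
    rw [hFs]
    have : (4:ℝ) * μ₁ * I s = 4 * (μ₁ * I s) := by ring
    simp only [hIdef] at hn1 hn2 ⊢
    linarith
  have hgron : F t ≤ 4 * m * Real.exp (4 * μ₁ * t) := by
    have := gronwall_mono hFmono (a := 4 * m) (c := 4 * μ₁)
      (by linarith) (by linarith) ht (hFnn 0) hF_ineq
    simpa using this
  have hexp : Real.exp (4 * μ₁ * t) ≤ Real.exp (6 * μ₁ * t) := by
    apply Real.exp_le_exp.2
    nlinarith
  have hmt : max t 0 = t := max_eq_left ht
  have hy1F : unifNorm t y₁ ≤ F t := by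
    have : F t = unifNorm t y₁ + unifNorm t y₂ := by simp only [hFdef, hmt]
    rw [this]
    exact le_add_of_nonneg_right (unifNorm_nonneg _ ht)
  have hy2F : unifNorm t y₂ ≤ F t := by
    have : F t = unifNorm t y₁ + unifNorm t y₂ := by simp only [hFdef, hmt]
    rw [this]
    exact le_add_of_nonneg_left (unifNorm_nonneg _ ht)
  have hexp0 : (0:ℝ) < Real.exp (6 * μ₁ * t) := Real.exp_pos _
  constructor
  · calc unifNorm t y₁ ≤ F t := hy1F
      _ ≤ 4 * m * Real.exp (4 * μ₁ * t) := hgron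
      _ ≤ 4 * m * Real.exp (6 * μ₁ * t) :=
          mul_le_mul_of_nonneg_left hexp (by linarith)
  · calc unifNorm t y₂ ≤ F t := hy2F
      _ ≤ 4 * m * Real.exp (4 * μ₁ * t) := hgron
      _ ≤ 8 * m * Real.exp (6 * μ₁ * t) := by nlinarith [Real.exp_pos (4 * μ₁ * t)]
end

section
/- Let μ > 0 and ρ > 1 be reals, and let (b_i)_{i≥1} be a sequence of reals with Σ_{i≥1} ρ^{−i}|b_i| < ∞. For each i ≥ 1 define y_i(t) = e^{−μt}·Σ_{k=0}^∞ ((μt)^k / k!)·b_{i+k} for t ≥ 0 (the series converges absolutely for every t ≥ 0). Then for every i ≥ 1 and every t ≥ 0, y_i(t) = b_i − μ·∫₀ᵗ (y_i(s) − y_{i+1}(s)) ds; that is, the functions y_i solve the infinite system of differential equations y_i'(t) = −μ·(y_i(t) − y_{i+1}(t)) with initial values y_i(0) = b_i. -/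
/-- The explicit series solution
`y_i(t) = e^{-μ t} ∑_{k≥0} (μ t)^k / k! · b_{i+k}`. -/
noncomputable def ySeries (μ : ℝ) (b : ℕ → ℝ) (i : ℕ) (t : ℝ) : ℝ :=
  Real.exp (-(μ * t)) * ∑' k : ℕ, (μ * t) ^ k / (Nat.factorial k : ℝ) * b (i + k)

/-- The explicit series `y_i` solves the infinite system of differential
equations `y_i' = -μ (y_i - y_{i+1})` with initial values `y_i(0) = b_i`,
for any weighted-summable initial sequence `b`. -/
theorem tail_ode_series_solution
    (μ ρ : ℝ) (hμ : 0 < μ) (hρ : 1 < ρ) (b : ℕ → ℝ)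
    (hb : Summable fun i : ℕ => ρ⁻¹ ^ i * |b i|) (i : ℕ) :
    (∀ t : ℝ, 0 ≤ t →
      Summable fun k : ℕ => |(μ * t) ^ k / (Nat.factorial k : ℝ) * b (i + k)|) ∧
    ySeries μ b i 0 = b i ∧
    (∀ t : ℝ, 0 ≤ t →
      ySeries μ b i t
        = b i - μ * ∫ s in (0:ℝ)..t, (ySeries μ b i s - ySeries μ b (i + 1) s)) ∧
    (∀ t : ℝ, 0 ≤ t →
      HasDerivAt (ySeries μ b i)
        (-(μ * (ySeries μ b i t - ySeries μ b (i + 1) t))) t) := by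
  have hρ0 : (0:ℝ) < ρ := lt_trans one_pos hρ
  set C := ∑' n : ℕ, ρ⁻¹ ^ n * |b n| with hCdef
  have hC : ∀ n, |b n| ≤ C * ρ ^ n := by
    intro n
    have h1 : ρ⁻¹ ^ n * |b n| ≤ C :=
      Summable.le_tsum hb n (fun m _ => by positivity)
    have h2 : (ρ⁻¹ ^ n * |b n|) * ρ ^ n ≤ C * ρ ^ n :=
      mul_le_mul_of_nonneg_right h1 (by positivity)
    calc |b n| = (ρ⁻¹ ^ n * |b n|) * ρ ^ n := by
          rw [mul_comm (ρ⁻¹ ^ n * |b n|), ← mul_assoc, inv_pow, mul_inv_cancel₀ (pow_ne_zero n hρ0.ne'), one_mul]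
      _ ≤ C * ρ ^ n := h2
  have hC0 : 0 ≤ C := tsum_nonneg (fun m => by positivity)
  have hsum : ∀ (j : ℕ) (x : ℝ),
      Summable fun k : ℕ => |(μ * x) ^ k / (Nat.factorial k : ℝ) * b (j + k)| := by
    intro j x
    have hbase : Summable fun k : ℕ => (|μ * x| * ρ) ^ k / (Nat.factorial k : ℝ) * (C * ρ ^ j) :=
      (Real.summable_pow_div_factorial (|μ * x| * ρ)).mul_right _
    refine Summable.of_nonneg_of_le (fun k => abs_nonneg _) (fun k => ?_) hbase
    have h1 : |(μ * x) ^ k / (Nat.factorial k : ℝ) * b (j + k)|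
        = |μ * x| ^ k / (Nat.factorial k : ℝ) * |b (j + k)| := by
      rw [abs_mul, abs_div, abs_pow, Nat.abs_cast]
    rw [h1]
    calc |μ * x| ^ k / (Nat.factorial k : ℝ) * |b (j + k)|
        ≤ |μ * x| ^ k / (Nat.factorial k : ℝ) * (C * ρ ^ (j + k)) :=
          mul_le_mul_of_nonneg_left (hC _) (by positivity)
      _ = (|μ * x| * ρ) ^ k / (Nat.factorial k : ℝ) * (C * ρ ^ j) := by
          rw [pow_add, mul_pow]; ring
  have hsum' : ∀ (j : ℕ) (x : ℝ),
      Summable fun k : ℕ => (μ * x) ^ k / (Nat.factorial k : ℝ) * b (j + k) :=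
    fun j x => (hsum j x).of_abs
  -- derivative of the tsum part
  have hF : ∀ (j : ℕ) (t : ℝ),
      HasDerivAt (fun x => ∑' k : ℕ, (μ * x) ^ k / (Nat.factorial k : ℝ) * b (j + k))
        (μ * ∑' k : ℕ, (μ * t) ^ k / (Nat.factorial k : ℝ) * b (j + 1 + k)) t := by
    intro j t
    set R := |t| + 1 with hR
    have hR0 : (0:ℝ) < R := by positivity
    have htR : t ∈ Metric.ball (0:ℝ) R := by
      simp only [Metric.mem_ball, Real.dist_eq, sub_zero, hR]
      linarith
    set g : ℕ → ℝ → ℝ := fun n x => (μ * x) ^ n / (Nat.factorial n : ℝ) * b (j + n) with hg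
    set g' : ℕ → ℝ → ℝ :=
      fun n x => ((n : ℝ) * (μ * x) ^ (n - 1) * μ) / (Nat.factorial n : ℝ) * b (j + n) with hg'
    set u : ℕ → ℝ :=
      fun n => (μ * R * ρ) ^ (n - 1) / (Nat.factorial (n - 1) : ℝ) * (μ * C * ρ ^ (j + 1)) with hu
    have hu_sum : Summable u := by
      rw [← summable_nat_add_iff 1]
      simpa [hu] using
        ((Real.summable_pow_div_factorial (μ * R * ρ)).mul_right (μ * C * ρ ^ (j + 1)))
    have hgderiv : ∀ (n : ℕ) (x : ℝ), x ∈ Metric.ball (0:ℝ) R → HasDerivAt (g n) (g' n x) x := by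
      intro n x _
      have h1 : HasDerivAt (fun x : ℝ => μ * x) (μ * 1) x := (hasDerivAt_id x).const_mul μ
      have h2 : HasDerivAt (fun x : ℝ => (μ * x) ^ n)
          ((n : ℝ) * (μ * x) ^ (n - 1) * (μ * 1)) x :=
        (hasDerivAt_pow n (μ * x)).comp x h1
      have h3 := (h2.div_const (Nat.factorial n : ℝ)).mul_const (b (j + n))
      convert h3 using 1
      exacts [rfl, rfl, by simp only [hg']; ring]
    have hgbound : ∀ (n : ℕ) (x : ℝ), x ∈ Metric.ball (0:ℝ) R → ‖g' n x‖ ≤ u n := by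
      intro n x hx
      have hxR : |x| < R := by
        simpa only [Metric.mem_ball, Real.dist_eq, sub_zero] using hx
      have hμx : |μ * x| ≤ μ * R := by
        rw [abs_mul, abs_of_pos hμ]
        exact mul_le_mul_of_nonneg_left hxR.le hμ.le
      match n with
      | 0 =>
        simp only [hg', hu, Nat.cast_zero, zero_mul, zero_div, zero_mul, Real.norm_eq_abs,
          abs_zero]
        positivity
      | Nat.succ m =>
        have hfac : (Nat.factorial (m + 1) : ℝ) = ((m:ℝ) + 1) * (Nat.factorial m : ℝ) := by
          push_cast [Nat.factorial_succ]; ring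
        have hfm : (0:ℝ) < (Nat.factorial m : ℝ) := by positivity
        have heq : ‖g' (m + 1) x‖
            = |μ * x| ^ m / (Nat.factorial m : ℝ) * μ * |b (j + (m + 1))| := by
          simp only [hg', Real.norm_eq_abs, abs_mul, abs_div, abs_pow, Nat.abs_cast,
            Nat.succ_sub_one, abs_of_pos hμ, hfac]
          push_cast
          rw [abs_of_nonneg (show (0:ℝ) ≤ (m:ℝ) + 1 by positivity)]
          field_simp
        rw [heq]
        have hb' : |b (j + (m + 1))| ≤ C * ρ ^ (j + 1) * ρ ^ m := by
          calc |b (j + (m + 1))| ≤ C * ρ ^ (j + (m + 1)) := hC _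
            _ = C * ρ ^ (j + 1) * ρ ^ m := by
                rw [mul_assoc, ← pow_add]
                congr 2
                omega
        have hpow : |μ * x| ^ m ≤ (μ * R) ^ m := pow_le_pow_left₀ (abs_nonneg _) hμx m
        calc |μ * x| ^ m / (Nat.factorial m : ℝ) * μ * |b (j + (m + 1))|
            ≤ (μ * R) ^ m / (Nat.factorial m : ℝ) * μ * (C * ρ ^ (j + 1) * ρ ^ m) := by
              apply mul_le_mul _ hb' (abs_nonneg _) (by positivity)
              exact mul_le_mul_of_nonneg_right
                (div_le_div_of_nonneg_right hpow hfm.le) hμ.le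
          _ = u (m + 1) := by
              simp only [hu, Nat.succ_sub_one, mul_pow]
              ring
    have hmain := hasDerivAt_tsum_of_isPreconnected hu_sum Metric.isOpen_ball
      ((convex_ball (0:ℝ) R).isPreconnected)
      hgderiv hgbound (Metric.mem_ball_self hR0)
      ((hsum' j 0).congr (fun k => rfl)) htR
    have hsumg' : Summable fun n => g' n t :=
      Summable.of_norm (hu_sum.of_nonneg_of_le (fun n => norm_nonneg _)
        (fun n => hgbound n t htR))
    have hrw : (∑' n, g' n t)
        = μ * ∑' k : ℕ, (μ * t) ^ k / (Nat.factorial k : ℝ) * b (j + 1 + k) := by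
      rw [hsumg'.tsum_eq_zero_add]
      have h0 : g' 0 t = 0 := by simp [hg']
      have hshift : ∀ n : ℕ, g' (n + 1) t
          = μ * ((μ * t) ^ n / (Nat.factorial n : ℝ) * b (j + 1 + n)) := by
        intro n
        have hfac : (Nat.factorial (n + 1) : ℝ) = ((n:ℝ) + 1) * (Nat.factorial n : ℝ) := by
          push_cast [Nat.factorial_succ]; ring
        simp only [hg', Nat.succ_sub_one, hfac]
        push_cast
        have h1 : j + (n + 1) = j + 1 + n := by ring
        rw [h1]
        have hfm : (Nat.factorial n : ℝ) ≠ 0 := by positivity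
        field_simp
      rw [h0, zero_add]
      simp_rw [hshift]
      rw [tsum_mul_left]
    rw [hrw] at hmain
    exact hmain
  -- derivative of ySeries
  have hY : ∀ (j : ℕ) (t : ℝ),
      HasDerivAt (ySeries μ b j)
        (-(μ * (ySeries μ b j t - ySeries μ b (j + 1) t))) t := by
    intro j t
    have he : HasDerivAt (fun x : ℝ => Real.exp (-(μ * x)))
        (Real.exp (-(μ * t)) * (-(μ * 1))) t := by
      have h1 : HasDerivAt (fun x : ℝ => -(μ * x)) (-(μ * 1)) t :=
        ((hasDerivAt_id t).const_mul μ).neg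
      exact (Real.hasDerivAt_exp (-(μ * t))).comp t h1
    have hprod := he.mul (hF j t)
    have : HasDerivAt (ySeries μ b j)
        (Real.exp (-(μ * t)) * (-(μ * 1)) *
            (∑' k : ℕ, (μ * t) ^ k / (Nat.factorial k : ℝ) * b (j + k)) +
          Real.exp (-(μ * t)) *
            (μ * ∑' k : ℕ, (μ * t) ^ k / (Nat.factorial k : ℝ) * b (j + 1 + k))) t := hprod
    convert this using 1
    simp only [ySeries]
    ring
  refine ⟨fun t _ => hsum i t, ?_, ?_, fun t _ => hY i t⟩
  · -- initial value
    simp only [ySeries, mul_zero, neg_zero, Real.exp_zero, one_mul]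
    rw [tsum_eq_single 0 (fun k hk => by simp [zero_pow hk])]
    simp
  · -- integral equation
    intro t _
    have hcont : ∀ j : ℕ, Continuous (ySeries μ b j) := by
      intro j
      exact continuous_iff_continuousAt.2 fun x => (hY j x).continuousAt
    have hderiv : ∀ s ∈ Set.uIcc (0:ℝ) t,
        HasDerivAt (ySeries μ b i)
          (-(μ * (ySeries μ b i s - ySeries μ b (i + 1) s))) s :=
      fun s _ => hY i s
    have hint : IntervalIntegrable
        (fun s => -(μ * (ySeries μ b i s - ySeries μ b (i + 1) s)))
        MeasureTheory.volume 0 t :=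
      (continuous_const.mul ((hcont i).sub (hcont (i + 1)))).neg.intervalIntegrable 0 t
    have hftc := intervalIntegral.integral_eq_sub_of_hasDerivAt hderiv hint
    have h0 : ySeries μ b i 0 = b i := by
      simp only [ySeries, mul_zero, neg_zero, Real.exp_zero, one_mul]
      rw [tsum_eq_single 0 (fun k hk => by simp [zero_pow hk])]
      simp
    rw [intervalIntegral.integral_neg, intervalIntegral.integral_const_mul] at hftc
    rw [h0] at hftc
    linarith [hftc]
end

section
/- Let μ₁ > μ_M > 0 and β > 0 be reals and let n be a positive integer. For every x₁ ≤ 0 and every κ ≥ β/μ₁, the system of equations −β/(μ_M√n) + (x₁ + β/(μ_M√n))·e^{−μ_Mτ} − (μ₁x₂/(μ₁ − μ_M))·(e^{−μ₁τ} − e^{−μ_Mτ}) = 0 and x₂·e^{−μ₁τ} = κ/√n has a unique solution (x₂, τ) in [κ/√n, ∞) × [0, ∞). Moreover, when x₁ = 0 this unique solution is (x₂, τ) = (κ/√n, 0). -/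
set_option maxHeartbeats 1000000


/-- Uniqueness of the solution of the nonlinear system determining the
hitting point of the fluid trajectory (Lemma 7 of the paper). -/
theorem tau_system_unique_solution
    (μ₁ μM β : ℝ) (h1 : μM < μ₁) (h2 : 0 < μM) (hβ : 0 < β)
    (n : ℕ) (hn : 0 < n) (x₁ κ : ℝ) (hx₁ : x₁ ≤ 0) (hκ : β / μ₁ ≤ κ) :
    (∃! p : ℝ × ℝ,
      (κ / Real.sqrt (n : ℝ) ≤ p.1 ∧ 0 ≤ p.2) ∧
      (-β / (μM * Real.sqrt (n : ℝ)) +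
          (x₁ + β / (μM * Real.sqrt (n : ℝ))) * Real.exp (-(μM * p.2)) -
          μ₁ * p.1 / (μ₁ - μM) *
            (Real.exp (-(μ₁ * p.2)) - Real.exp (-(μM * p.2))) = 0) ∧
      p.1 * Real.exp (-(μ₁ * p.2)) = κ / Real.sqrt (n : ℝ)) ∧
    (x₁ = 0 →
      (-β / (μM * Real.sqrt (n : ℝ)) +
          (x₁ + β / (μM * Real.sqrt (n : ℝ))) * Real.exp (-(μM * (0:ℝ))) -
          μ₁ * (κ / Real.sqrt (n : ℝ)) / (μ₁ - μM) *
            (Real.exp (-(μ₁ * (0:ℝ))) - Real.exp (-(μM * (0:ℝ)))) = 0) ∧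
      (κ / Real.sqrt (n : ℝ)) * Real.exp (-(μ₁ * (0:ℝ))) = κ / Real.sqrt (n : ℝ)) := by
  have hμ₁ : 0 < μ₁ := h2.trans h1
  have hd : 0 < μ₁ - μM := sub_pos.mpr h1
  set S := Real.sqrt (n : ℝ) with hS
  have hSpos : 0 < S := Real.sqrt_pos.mpr (by positivity)
  have hκpos : 0 < κ := lt_of_lt_of_le (by positivity) hκ
  set c := β / (μM * S) with hc
  set k := κ / S with hk
  have hcpos : 0 < c := by positivity
  have hkpos : 0 < k := by positivity
  have hβκ : β ≤ μ₁ * κ := by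
    rw [div_le_iff₀ hμ₁] at hκ; nlinarith
  have hμk : μM * c ≤ μ₁ * k := by
    rw [hc, hk, show μM * (β / (μM * S)) = β / S by field_simp,
      show μ₁ * (κ / S) = μ₁ * κ / S by ring]
    gcongr
  -- the reduced one-variable function
  set A := μ₁ * k / (μ₁ - μM) with hA
  have hApos : 0 < A := by positivity
  clear_value S c k A
  set g : ℝ → ℝ := fun τ =>
    -c + (x₁ + c) * Real.exp (-(μM * τ)) - A * (1 - Real.exp ((μ₁ - μM) * τ)) with hg
  have hgc : Continuous g := by
    apply Continuous.sub
    · exact continuous_const.add (continuous_const.mul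
        (Real.continuous_exp.comp (continuous_const.mul continuous_id).neg))
    · exact continuous_const.mul (continuous_const.sub
        (Real.continuous_exp.comp (continuous_const.mul continuous_id)))
  have hg0 : g 0 = x₁ := by
    simp only [hg, mul_zero, neg_zero, Real.exp_zero, mul_one, sub_self,
      mul_zero]
    ring
  -- derivative
  have hderiv : ∀ τ : ℝ, HasDerivAt g
      (μ₁ * k * Real.exp ((μ₁ - μM) * τ) - (x₁ + c) * μM * Real.exp (-(μM * τ))) τ := by
    intro τ
    have hin1 : HasDerivAt (fun τ : ℝ => -(μM * τ)) (-μM) τ := by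
      exact (((hasDerivAt_id τ).const_mul μM).neg).congr_deriv (by simp)
    have hin2 : HasDerivAt (fun τ : ℝ => (μ₁ - μM) * τ) (μ₁ - μM) τ := by
      simpa using (hasDerivAt_id τ).const_mul (μ₁ - μM)
    have he1 : HasDerivAt (fun τ : ℝ => Real.exp (-(μM * τ)))
        (Real.exp (-(μM * τ)) * (-μM)) τ := (Real.hasDerivAt_exp _).comp τ hin1
    have he2 : HasDerivAt (fun τ : ℝ => Real.exp ((μ₁ - μM) * τ))
        (Real.exp ((μ₁ - μM) * τ) * (μ₁ - μM)) τ := (Real.hasDerivAt_exp _).comp τ hin2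
    have h := ((he1.const_mul (x₁ + c)).const_add (-c)).sub ((he2.const_sub 1).const_mul A)
    have hAe : A * (μ₁ - μM) = μ₁ * k := by
      rw [hA]; field_simp
    refine h.congr_deriv ?_
    linear_combination (Real.exp ((μ₁ - μM) * τ)) * hAe
  have hmono : StrictMonoOn g (Set.Ici (0 : ℝ)) := by
    apply strictMonoOn_of_deriv_pos (convex_Ici 0) hgc.continuousOn
    intro τ hτ
    rw [interior_Ici] at hτ
    have hτ0 : 0 < τ := hτ
    rw [(hderiv τ).deriv]
    have epos : (0:ℝ) < Real.exp (-(μM * τ)) := Real.exp_pos _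
    have e1 : Real.exp (-(μM * τ)) < 1 := by
      have := Real.exp_lt_exp.mpr (show -(μM * τ) < 0 by nlinarith)
      simpa using this
    have e2 : 1 < Real.exp ((μ₁ - μM) * τ) := by
      have := Real.exp_lt_exp.mpr (show (0:ℝ) < (μ₁ - μM) * τ from mul_pos hd hτ0)
      simpa using this
    have t1 : x₁ * (μM * Real.exp (-(μM * τ))) ≤ 0 :=
      mul_nonpos_of_nonpos_of_nonneg hx₁ (by positivity)
    have t2 : c * μM * Real.exp (-(μM * τ)) < c * μM := by
      nlinarith [mul_pos hcpos h2]
    have t3 : μ₁ * k < μ₁ * k * Real.exp ((μ₁ - μM) * τ) := by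
      nlinarith [mul_pos hμ₁ hkpos]
    nlinarith [t1, t2, t3, hμk]
  -- existence of a root via IVT
  set M := (c + |x₁ + c| + 1) / A with hM
  have hMpos : 0 < M := div_pos (by positivity) hApos
  set T := Real.log (1 + M) / (μ₁ - μM) with hT
  have hT0 : 0 ≤ T := div_nonneg (Real.log_nonneg (by linarith)) hd.le
  have hexpT : Real.exp ((μ₁ - μM) * T) = 1 + M := by
    rw [hT, mul_div_cancel₀ _ hd.ne']
    exact Real.exp_log (by linarith)
  clear_value M T
  have hgT : 1 ≤ g T := by
    have hAM : A * M = c + |x₁ + c| + 1 := by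
      rw [hM]; field_simp
    have he : (0:ℝ) < Real.exp (-(μM * T)) := Real.exp_pos _
    have he1 : Real.exp (-(μM * T)) ≤ 1 := by
      have := Real.exp_le_exp.mpr (show -(μM * T) ≤ 0 by nlinarith)
      simpa using this
    have hb : -(|x₁ + c|) ≤ (x₁ + c) * Real.exp (-(μM * T)) := by
      rcases le_or_gt 0 (x₁ + c) with h | h
      · have : (0:ℝ) ≤ (x₁ + c) * Real.exp (-(μM * T)) := by positivity
        nlinarith [abs_nonneg (x₁ + c)]
      · rw [abs_of_neg h]; nlinarith
    have hval : g T = -c + (x₁ + c) * Real.exp (-(μM * T)) - A * (1 - (1 + M)) := by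
      simp only [hg, hexpT]
    rw [hval]; nlinarith
  obtain ⟨τ₀, hτ₀mem, hgτ₀⟩ : ∃ τ₀ ∈ Set.Icc 0 T, g τ₀ = 0 := by
    have h := intermediate_value_Icc hT0 hgc.continuousOn
    have h0 : (0 : ℝ) ∈ Set.Icc (g 0) (g T) := ⟨by rw [hg0]; exact hx₁, by linarith⟩
    obtain ⟨τ₀, hmem, heq⟩ := h h0
    exact ⟨τ₀, hmem, heq⟩
  have hτ₀0 : 0 ≤ τ₀ := hτ₀mem.1
  -- translation between the system and g
  have key : ∀ τ : ℝ,
      -β / (μM * S) + (x₁ + c) * Real.exp (-(μM * τ)) -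
        μ₁ * (k * Real.exp (μ₁ * τ)) / (μ₁ - μM) *
          (Real.exp (-(μ₁ * τ)) - Real.exp (-(μM * τ))) = g τ := by
    intro τ
    have h1' : Real.exp (μ₁ * τ) * Real.exp (-(μ₁ * τ)) = 1 := by
      rw [← Real.exp_add]; simp
    have h2' : Real.exp (μ₁ * τ) * Real.exp (-(μM * τ)) = Real.exp ((μ₁ - μM) * τ) := by
      rw [← Real.exp_add]; ring_nf
    have expand : Real.exp (μ₁ * τ) * (Real.exp (-(μ₁ * τ)) - Real.exp (-(μM * τ))) =
        1 - Real.exp ((μ₁ - μM) * τ) := by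
      rw [mul_sub, h1', h2']
    have hc' : -β / (μM * S) = -c := by rw [hc, neg_div]
    simp only [hg, hc']
    rw [hA, ← expand]
    ring
  refine ⟨⟨(k * Real.exp (μ₁ * τ₀), τ₀), ⟨⟨?_, hτ₀0⟩, ?_, ?_⟩, ?_⟩, ?_⟩
  · exact le_mul_of_one_le_right hkpos.le (Real.one_le_exp (by positivity))
  · rw [key τ₀]; exact hgτ₀
  · show k * Real.exp (μ₁ * τ₀) * Real.exp (-(μ₁ * τ₀)) = k
    rw [mul_assoc, ← Real.exp_add]; simp
  · rintro ⟨x₂, τ⟩ ⟨⟨hx₂, hτ⟩, heq1, heq2⟩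
    simp only at hx₂ hτ heq1 heq2
    have hx₂eq : x₂ = k * Real.exp (μ₁ * τ) := by
      have h := congrArg (· * Real.exp (μ₁ * τ)) heq2
      rw [mul_assoc, ← Real.exp_add] at h
      simpa using h
    have hgτ : g τ = 0 := by
      rw [← key τ, ← hx₂eq]; exact heq1
    have hττ₀ : τ = τ₀ :=
      hmono.injOn hτ hτ₀0 (by rw [hgτ, hgτ₀])
    exact Prod.ext (by rw [hx₂eq, hττ₀]) hττ₀
  · intro hx₁0
    subst hx₁0
    refine ⟨?_, by simp⟩
    simp only [mul_zero, neg_zero, Real.exp_zero, mul_one, sub_self, mul_zero, zero_add]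
    rw [hc, neg_div]; ring
end

section
/- With the definitions below, let κ ≥ β/μ₁ and x = (x₁, x₂) ∈ Ω. Then: (i) if x₂ ≥ x₂*(x₁, κ), then τ(x) < ∞ and x₂·e^{−μ₁τ(x)} ≥ κ/√n; (ii) if x₂ = x₂*(x₁, κ), then τ(x) = τ*(x₁, κ), and consequently x₂·e^{−μ₁τ(x)} = κ/√n. -/
/-- The function `g_x(τ)` whose first nonnegative zero defines the hitting
time `τ(x)` of the fluid trajectory. -/
noncomputable def gfun (μ₁ μM β : ℝ) (n : ℕ) (x₁ x₂ τ : ℝ) : ℝ :=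
  -β / (μM * Real.sqrt (n : ℝ)) +
    (x₁ + β / (μM * Real.sqrt (n : ℝ))) * Real.exp (-(μM * τ)) -
    μ₁ * x₂ / (μ₁ - μM) * (Real.exp (-(μ₁ * τ)) - Real.exp (-(μM * τ)))

/-- The set of nonnegative zeros of `g_x`; `τ(x)` is its infimum, and
`τ(x) = ∞` corresponds to this set being empty. -/
def zeroSet (μ₁ μM β : ℝ) (n : ℕ) (x₁ x₂ : ℝ) : Set ℝ :=
  {τ : ℝ | 0 ≤ τ ∧ gfun μ₁ μM β n x₁ x₂ τ = 0}

/-- `g` can be rewritten as `e^{-μM τ}` times an auxiliary function `F`. -/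
lemma gfun_eq (μ₁ μM β : ℝ) (n : ℕ) (x₁ x₂ τ : ℝ) :
    gfun μ₁ μM β n x₁ x₂ τ =
      Real.exp (-(μM * τ)) *
        ((x₁ + β / (μM * Real.sqrt (n : ℝ)))
          + μ₁ * x₂ / (μ₁ - μM) * (1 - Real.exp (-((μ₁ - μM) * τ)))
          - β / (μM * Real.sqrt (n : ℝ)) * Real.exp (μM * τ)) := by
  have h1 : Real.exp (-(μM * τ)) * Real.exp (μM * τ) = 1 := by
    rw [← Real.exp_add]; simp
  have h2 : Real.exp (-(μM * τ)) * Real.exp (-((μ₁ - μM) * τ)) = Real.exp (-(μ₁ * τ)) := by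
    rw [← Real.exp_add]; congr 1; ring
  unfold gfun
  linear_combination (β / (μM * Real.sqrt (n : ℝ))) * h1
    + (μ₁ * x₂ / (μ₁ - μM)) * h2

/-- Parts 1 and 2 of Lemma 8 of the paper: above the curve `Γ^κ` the hitting
time `τ(x)` is finite and `x₂ e^{-μ₁ τ(x)} ≥ κ/√n`; on the curve `Γ^κ`,
`τ(x) = τ*(x₁,κ)` and `x₂ e^{-μ₁ τ(x)} = κ/√n`. -/
theorem tau_above_on_curve
    (μ₁ μM β : ℝ) (h1 : μM < μ₁) (h2 : 0 < μM) (hβ : 0 < β)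
    (n : ℕ) (hn : 0 < n) (κ : ℝ) (hκ : β / μ₁ ≤ κ)
    (x₁ x₂ : ℝ) (hx₁ : x₁ ≤ 0) (hx₂ : 0 ≤ x₂)
    -- `(x₂s, τs)` is the pair `(x₂*(x₁,κ), τ*(x₁,κ))` of Lemma 7:
    (x₂s τs : ℝ)
    (hs : κ / Real.sqrt (n : ℝ) ≤ x₂s) (hτs : 0 ≤ τs)
    (hg : gfun μ₁ μM β n x₁ x₂s τs = 0)
    (he : x₂s * Real.exp (-(μ₁ * τs)) = κ / Real.sqrt (n : ℝ)) :
    (x₂s ≤ x₂ →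
      (zeroSet μ₁ μM β n x₁ x₂).Nonempty ∧
      κ / Real.sqrt (n : ℝ) ≤
        x₂ * Real.exp (-(μ₁ * sInf (zeroSet μ₁ μM β n x₁ x₂)))) ∧
    (x₂ = x₂s →
      sInf (zeroSet μ₁ μM β n x₁ x₂) = τs ∧
      x₂ * Real.exp (-(μ₁ * sInf (zeroSet μ₁ μM β n x₁ x₂)))
        = κ / Real.sqrt (n : ℝ)) := by
  have hs0 : 0 < Real.sqrt (n : ℝ) := Real.sqrt_pos.mpr (by exact_mod_cast hn)
  set s : ℝ := Real.sqrt (n : ℝ) with hsdef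
  have hμ1 : 0 < μ₁ := lt_trans h2 h1
  have hκ0 : 0 < κ := lt_of_lt_of_le (div_pos hβ hμ1) hκ
  have hx2s : 0 < x₂s := lt_of_lt_of_le (div_pos hκ0 hs0) hs
  have hd : 0 < μ₁ - μM := sub_pos.mpr h1
  have hβκ : β ≤ μ₁ * κ := by
    rw [div_le_iff₀ hμ1] at hκ; linarith [hκ]
  -- continuity of g in τ
  have hcont : ∀ y : ℝ, Continuous (fun τ => gfun μ₁ μM β n x₁ y τ) := by
    intro y; unfold gfun; fun_prop
  -- g at τ = 0
  have hg0 : ∀ y : ℝ, gfun μ₁ μM β n x₁ y 0 = x₁ := by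
    intro y; unfold gfun; simp; ring
  set c : ℝ := β / (μM * s) with hcdef
  -- auxiliary function F with g = e^{-μM τ} F
  set F : ℝ → ℝ := fun τ =>
    (x₁ + c) + μ₁ * x₂s / (μ₁ - μM) * (1 - Real.exp (-((μ₁ - μM) * τ)))
      - c * Real.exp (μM * τ) with hFdef
  have hFg : ∀ τ, gfun μ₁ μM β n x₁ x₂s τ = Real.exp (-(μM * τ)) * F τ := by
    intro τ; exact gfun_eq μ₁ μM β n x₁ x₂s τ
  have hFτs : F τs = 0 := by
    have h := (hFg τs).symm
    rw [hg] at h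
    rcases mul_eq_zero.mp h with h' | h'
    · exact absurd h' (Real.exp_ne_zero _)
    · exact h'
  -- key fact: g_{x₂s} is negative strictly before τs
  have key : ∀ t, 0 ≤ t → t < τs → gfun μ₁ μM β n x₁ x₂s t < 0 := by
    intro t ht htτ
    -- derivative of F
    have hder : ∀ τ : ℝ, HasDerivAt F
        (μ₁ * x₂s * Real.exp (-((μ₁ - μM) * τ)) - c * μM * Real.exp (μM * τ)) τ := by
      intro τ
      have d1 : HasDerivAt (fun τ : ℝ => Real.exp (-((μ₁ - μM) * τ)))
          (Real.exp (-((μ₁ - μM) * τ)) * -((μ₁ - μM) * 1)) τ :=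
        (((hasDerivAt_id τ).const_mul (μ₁ - μM)).neg).exp
      have d2 : HasDerivAt (fun τ : ℝ => Real.exp (μM * τ))
          (Real.exp (μM * τ) * (μM * 1)) τ :=
        ((hasDerivAt_id τ).const_mul μM).exp
      have dF : HasDerivAt F
          ((0 : ℝ) + μ₁ * x₂s / (μ₁ - μM) * (0 - Real.exp (-((μ₁ - μM) * τ)) * -((μ₁ - μM) * 1))
            - c * (Real.exp (μM * τ) * (μM * 1))) τ := by
        exact ((hasDerivAt_const τ (x₁ + c)).add
          (((hasDerivAt_const τ (1 : ℝ)).sub d1).const_mul (μ₁ * x₂s / (μ₁ - μM)))).sub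
          (d2.const_mul c)
      convert dF using 1
      field_simp
      ring
    -- derivative is positive on (0, τs)
    have hpos : ∀ τ ∈ Set.Ioo (0 : ℝ) τs, 0 < deriv F τ := by
      intro τ hτ
      rw [(hder τ).deriv]
      have hsplit : Real.exp (-((μ₁ - μM) * τ)) = Real.exp (-(μ₁ * τ)) * Real.exp (μM * τ) := by
        rw [← Real.exp_add]; congr 1; ring
      have hcm : c * μM = β / s := by
        rw [hcdef]; field_simp
      have hexp : Real.exp (-(μ₁ * τs)) < Real.exp (-(μ₁ * τ)) := by
        apply Real.exp_lt_exp.mpr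
        nlinarith [hτ.2]
      have hval : β / s < μ₁ * x₂s * Real.exp (-(μ₁ * τ)) := by
        have h1' : μ₁ * x₂s * Real.exp (-(μ₁ * τs)) = μ₁ * (κ / s) := by
          rw [← he]; ring
        have h2' : β / s ≤ μ₁ * (κ / s) := by
          rw [← mul_div_assoc]
          exact div_le_div_of_nonneg_right hβκ hs0.le
        nlinarith [mul_lt_mul_of_pos_left hexp (mul_pos hμ1 hx2s)]
      rw [hsplit, hcm]
      have := Real.exp_pos (μM * τ)
      nlinarith [this, hval]
    -- F is strictly monotone on [0, τs]
    have hFc : ContinuousOn F (Set.Icc 0 τs) := by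
      rw [hFdef]; fun_prop
    have hmono : StrictMonoOn F (Set.Icc 0 τs) := by
      apply strictMonoOn_of_deriv_pos (convex_Icc 0 τs) hFc
      intro τ hτ
      rw [interior_Icc] at hτ
      exact hpos τ hτ
    have hFt : F t < 0 := by
      have := hmono ⟨ht, le_of_lt htτ⟩ ⟨hτs, le_refl τs⟩ htτ
      rwa [hFτs] at this
    rw [hFg t]
    exact mul_neg_of_pos_of_neg (Real.exp_pos _) hFt
  constructor
  · -- part 1 : above the curve
    intro hle
    -- g_{x₂}(τs) ≥ 0
    have hee : Real.exp (-(μ₁ * τs)) ≤ Real.exp (-(μM * τs)) := by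
      apply Real.exp_le_exp.mpr
      nlinarith [hτs]
    have hdiff : gfun μ₁ μM β n x₁ x₂ τs - gfun μ₁ μM β n x₁ x₂s τs
        = μ₁ * (x₂ - x₂s) / (μ₁ - μM)
          * (Real.exp (-(μM * τs)) - Real.exp (-(μ₁ * τs))) := by
      unfold gfun; ring
    have hgts : 0 ≤ gfun μ₁ μM β n x₁ x₂ τs := by
      have hnn : 0 ≤ μ₁ * (x₂ - x₂s) / (μ₁ - μM)
          * (Real.exp (-(μM * τs)) - Real.exp (-(μ₁ * τs))) := by
        apply mul_nonneg
        · apply div_nonneg _ (le_of_lt hd)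
          nlinarith [hle]
        · linarith [hee]
      linarith [hdiff, hnn, hg.le, hg.ge]
    -- intermediate value theorem on [0, τs]
    have hiv := intermediate_value_Icc hτs (hcont x₂).continuousOn
    have h0mem : (0 : ℝ) ∈ Set.Icc (gfun μ₁ μM β n x₁ x₂ 0) (gfun μ₁ μM β n x₁ x₂ τs) := by
      constructor
      · rw [hg0]; exact hx₁
      · exact hgts
    obtain ⟨t, htmem, htg⟩ := hiv h0mem
    have htz : t ∈ zeroSet μ₁ μM β n x₁ x₂ := ⟨htmem.1, htg⟩
    have hbdd : BddBelow (zeroSet μ₁ μM β n x₁ x₂) := ⟨0, fun y hy => hy.1⟩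
    have hinf_le : sInf (zeroSet μ₁ μM β n x₁ x₂) ≤ t := csInf_le hbdd htz
    refine ⟨⟨t, htz⟩, ?_⟩
    have hIτs : sInf (zeroSet μ₁ μM β n x₁ x₂) ≤ τs := le_trans hinf_le htmem.2
    have hexple : Real.exp (-(μ₁ * τs)) ≤ Real.exp (-(μ₁ * sInf (zeroSet μ₁ μM β n x₁ x₂))) :=
      Real.exp_le_exp.mpr (neg_le_neg (mul_le_mul_of_nonneg_left hIτs hμ1.le))
    calc κ / s = x₂s * Real.exp (-(μ₁ * τs)) := he.symm
      _ ≤ x₂ * Real.exp (-(μ₁ * sInf (zeroSet μ₁ μM β n x₁ x₂))) :=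
          mul_le_mul hle hexple (Real.exp_pos _).le hx₂
  · -- part 2 : on the curve
    intro hxx
    subst hxx
    have hmem : τs ∈ zeroSet μ₁ μM β n x₁ x₂ := ⟨hτs, hg⟩
    have hlb : ∀ y ∈ zeroSet μ₁ μM β n x₁ x₂, τs ≤ y := by
      intro y hy
      by_contra hcon
      push_neg at hcon
      exact absurd hy.2 (ne_of_lt (key y hy.1 hcon))
    have heq : sInf (zeroSet μ₁ μM β n x₁ x₂) = τs :=
      le_antisymm (csInf_le ⟨0, fun y hy => hy.1⟩ hmem) (le_csInf ⟨τs, hmem⟩ hlb)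
    exact ⟨heq, by rw [heq]; exact he⟩
end

section
/- Fix reals μ₁ > μ_M > 0 and β > 0. For κ > β/μ_M and x = (x₁, x₂) with x₁ < −κ and x₂ ≥ 0, the set {t ≥ 0 : β/μ_M − κ ≤ (x₁ + β/μ_M + (μ₁x₂/(μ₁ − μ_M))·(1 − e^{−(μ₁−μ_M)t}))·e^{−μ_M t}} is nonempty and closed, so its minimum τ^κ(x) exists. Moreover, for any reals κ₁, κ₂ with β/μ_M < κ₁ < κ₂ and any x = (x₁, x₂) with x₁ < −κ₂ and x₂ ≥ 0, one has τ^{κ₂}(x) < τ^{κ₁}(x) and τ^{κ₁}(x) − τ^{κ₂}(x) ≤ (1/μ_M)·log((μ_M κ₂ − β)/(μ_M κ₁ − β)). -/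
/-- The set of times at which the first coordinate of the fluid trajectory has
risen to the level `-κ` (so `τ^κ(x)` is its minimum). -/
def hitSet (μ₁ μM β x₁ x₂ κ : ℝ) : Set ℝ :=
  {t : ℝ | 0 ≤ t ∧
    β / μM - κ ≤
      (x₁ + β / μM + μ₁ * x₂ / (μ₁ - μM) * (1 - Real.exp (-((μ₁ - μM) * t)))) *
        Real.exp (-(μM * t))}

noncomputable def Ffun (μ₁ μM β x₁ x₂ : ℝ) (t : ℝ) : ℝ :=
  (x₁ + β / μM + μ₁ * x₂ / (μ₁ - μM) * (1 - Real.exp (-((μ₁ - μM) * t)))) *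
    Real.exp (-(μM * t))

lemma hitSet_def (μ₁ μM β x₁ x₂ κ : ℝ) :
    hitSet μ₁ μM β x₁ x₂ κ = {t : ℝ | 0 ≤ t ∧ β / μM - κ ≤ Ffun μ₁ μM β x₁ x₂ t} := rfl

lemma Ffun_eq (μ₁ μM β x₁ x₂ t : ℝ) :
    Ffun μ₁ μM β x₁ x₂ t =
      (x₁ + β / μM + μ₁ * x₂ / (μ₁ - μM)) * Real.exp (-(μM * t))
        - μ₁ * x₂ / (μ₁ - μM) * Real.exp (-(μ₁ * t)) := by
  unfold Ffun
  have h : Real.exp (-(μ₁ * t)) = Real.exp (-((μ₁ - μM) * t)) * Real.exp (-(μM * t)) := by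
    rw [← Real.exp_add]; ring_nf
  rw [h]; ring

lemma Ffun_cont (μ₁ μM β x₁ x₂ : ℝ) : Continuous (Ffun μ₁ μM β x₁ x₂) := by
  unfold Ffun; continuity

lemma Ffun_zero (μ₁ μM β x₁ x₂ : ℝ) : Ffun μ₁ μM β x₁ x₂ 0 = x₁ + β / μM := by
  unfold Ffun; simp

lemma hitSet_bddBelow (μ₁ μM β x₁ x₂ κ : ℝ) : BddBelow (hitSet μ₁ μM β x₁ x₂ κ) :=
  ⟨0, fun _ ht => ht.1⟩

lemma hitSet_closed (μ₁ μM β x₁ x₂ κ : ℝ) : IsClosed (hitSet μ₁ μM β x₁ x₂ κ) := by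
  rw [hitSet_def]
  have : {t : ℝ | 0 ≤ t ∧ β / μM - κ ≤ Ffun μ₁ μM β x₁ x₂ t}
      = {t : ℝ | 0 ≤ t} ∩ {t : ℝ | β / μM - κ ≤ Ffun μ₁ μM β x₁ x₂ t} := rfl
  rw [this]
  exact (isClosed_le continuous_const continuous_id).inter
    (isClosed_le continuous_const (Ffun_cont μ₁ μM β x₁ x₂))

lemma tau_spec (μ₁ μM β x₁ x₂ κ : ℝ) (h1 : μM < μ₁) (h2 : 0 < μM)
    (hκ : β / μM < κ) (hx1 : x₁ < -κ) (hx2 : 0 ≤ x₂) :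
    (hitSet μ₁ μM β x₁ x₂ κ).Nonempty ∧
    sInf (hitSet μ₁ μM β x₁ x₂ κ) ∈ hitSet μ₁ μM β x₁ x₂ κ ∧
    Ffun μ₁ μM β x₁ x₂ (sInf (hitSet μ₁ μM β x₁ x₂ κ)) = β / μM - κ := by
  have hA : 0 ≤ μ₁ * x₂ / (μ₁ - μM) :=
    div_nonneg (mul_nonneg (h2.trans h1).le hx2) (sub_pos.mpr h1).le
  set A := μ₁ * x₂ / (μ₁ - μM) with hAdef
  have hE : 0 < κ - β / μM := by linarith
  have hD : κ - β / μM < -x₁ - β / μM := by linarith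
  have hDpos : 0 < -x₁ - β / μM := hE.trans hD
  set D := -x₁ - β / μM with hDdef
  set E := κ - β / μM with hEdef
  -- explicit witness
  set t₀ := Real.log (D / E) / μM with ht₀def
  have hratio : 1 < D / E := (one_lt_div hE).mpr hD
  have ht₀ : 0 ≤ t₀ := div_nonneg (Real.log_nonneg hratio.le) h2.le
  have hexp : Real.exp (-(μM * t₀)) = E / D := by
    have : μM * t₀ = Real.log (D / E) := by
      rw [ht₀def]; field_simp
    rw [this, ← Real.log_inv, Real.exp_log (by positivity)]
    rw [inv_div]
  have hwit : t₀ ∈ hitSet μ₁ μM β x₁ x₂ κ := by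
    refine ⟨ht₀, ?_⟩
    have h1' : Ffun μ₁ μM β x₁ x₂ t₀ =
        (x₁ + β / μM + A) * Real.exp (-(μM * t₀)) - A * Real.exp (-(μ₁ * t₀)) :=
      Ffun_eq μ₁ μM β x₁ x₂ t₀
    have hmono : A * Real.exp (-(μ₁ * t₀)) ≤ A * Real.exp (-(μM * t₀)) := by
      apply mul_le_mul_of_nonneg_left _ hA
      apply Real.exp_le_exp.mpr
      nlinarith
    have hXD : x₁ + β / μM = -D := by rw [hDdef]; ring
    have key : Ffun μ₁ μM β x₁ x₂ t₀ ≥ (x₁ + β / μM) * Real.exp (-(μM * t₀)) := by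
      rw [h1']; nlinarith
    have : (x₁ + β / μM) * Real.exp (-(μM * t₀)) = β / μM - κ := by
      rw [hXD, hexp]
      have hDE : D * (E / D) = E := by field_simp
      rw [neg_mul, hDE, hEdef]; ring
    show β / μM - κ ≤ _
    rw [← this]; exact key
  have hne : (hitSet μ₁ μM β x₁ x₂ κ).Nonempty := ⟨t₀, hwit⟩
  have hbdd := hitSet_bddBelow μ₁ μM β x₁ x₂ κ
  have hmem : sInf (hitSet μ₁ μM β x₁ x₂ κ) ∈ hitSet μ₁ μM β x₁ x₂ κ :=
    (hitSet_closed μ₁ μM β x₁ x₂ κ).csInf_mem hne hbdd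
  refine ⟨hne, hmem, ?_⟩
  set τ := sInf (hitSet μ₁ μM β x₁ x₂ κ) with hτ
  obtain ⟨hτ0, hτge⟩ := hmem
  have hF0 : Ffun μ₁ μM β x₁ x₂ 0 < β / μM - κ := by
    rw [Ffun_zero]; linarith
  -- IVT: there is s ∈ [0, τ] with F s = β/μM - κ
  have hsub : Set.Icc (Ffun μ₁ μM β x₁ x₂ 0) (Ffun μ₁ μM β x₁ x₂ τ)
      ⊆ Ffun μ₁ μM β x₁ x₂ '' Set.Icc 0 τ :=
    intermediate_value_Icc hτ0 (Ffun_cont μ₁ μM β x₁ x₂).continuousOn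
  obtain ⟨s, hs, hFs⟩ := hsub ⟨hF0.le, hτge⟩
  have hsS : s ∈ hitSet μ₁ μM β x₁ x₂ κ := ⟨hs.1, hFs.ge⟩
  have : τ ≤ s := csInf_le hbdd hsS
  have hsτ : s = τ := le_antisymm hs.2 this
  rw [← hsτ]; exact hFs

/-- The hitting times `τ^κ(x)` of the fluid trajectory exist (the defining set
is nonempty and closed, hence contains its infimum), are strictly decreasing in
`κ`, and satisfy the logarithmic spacing bound
`τ^{κ₁}(x) − τ^{κ₂}(x) ≤ (1/μ_M) log((μ_M κ₂ − β)/(μ_M κ₁ − β))`. -/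
theorem hitting_time_exists_and_spacing
    (μ₁ μM β : ℝ) (h1 : μM < μ₁) (h2 : 0 < μM) (hβ : 0 < β) :
    (∀ κ x₁ x₂ : ℝ, β / μM < κ → x₁ < -κ → 0 ≤ x₂ →
      (hitSet μ₁ μM β x₁ x₂ κ).Nonempty ∧
      IsClosed (hitSet μ₁ μM β x₁ x₂ κ) ∧
      sInf (hitSet μ₁ μM β x₁ x₂ κ) ∈ hitSet μ₁ μM β x₁ x₂ κ) ∧
    (∀ κ₁ κ₂ x₁ x₂ : ℝ, β / μM < κ₁ → κ₁ < κ₂ → x₁ < -κ₂ → 0 ≤ x₂ →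
      sInf (hitSet μ₁ μM β x₁ x₂ κ₂) < sInf (hitSet μ₁ μM β x₁ x₂ κ₁) ∧
      sInf (hitSet μ₁ μM β x₁ x₂ κ₁) - sInf (hitSet μ₁ μM β x₁ x₂ κ₂)
        ≤ 1 / μM * Real.log ((μM * κ₂ - β) / (μM * κ₁ - β))) := by
  constructor
  · intro κ x₁ x₂ hκ hx1 hx2
    obtain ⟨hne, hmem, _⟩ := tau_spec μ₁ μM β x₁ x₂ κ h1 h2 hκ hx1 hx2
    exact ⟨hne, hitSet_closed μ₁ μM β x₁ x₂ κ, hmem⟩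
  · intro κ₁ κ₂ x₁ x₂ hκ₁ hκ₁₂ hx1 hx2
    have hκ₂ : β / μM < κ₂ := hκ₁.trans hκ₁₂
    have hx1' : x₁ < -κ₁ := by linarith
    obtain ⟨hne₁, hmem₁, hFτ₁⟩ := tau_spec μ₁ μM β x₁ x₂ κ₁ h1 h2 hκ₁ hx1' hx2
    obtain ⟨hne₂, hmem₂, hFτ₂⟩ := tau_spec μ₁ μM β x₁ x₂ κ₂ h1 h2 hκ₂ hx1 hx2
    set τ₁ := sInf (hitSet μ₁ μM β x₁ x₂ κ₁) with hτ₁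
    set τ₂ := sInf (hitSet μ₁ μM β x₁ x₂ κ₂) with hτ₂
    have hsub : hitSet μ₁ μM β x₁ x₂ κ₁ ⊆ hitSet μ₁ μM β x₁ x₂ κ₂ := by
      rintro t ⟨ht0, hle⟩
      exact ⟨ht0, le_trans (by linarith) hle⟩
    have hle : τ₂ ≤ τ₁ := csInf_le_csInf (hitSet_bddBelow μ₁ μM β x₁ x₂ κ₂) hne₁ hsub
    have hlt : τ₂ < τ₁ := by
      rcases lt_or_eq_of_le hle with h | h
      · exact h
      · exfalso
        rw [h] at hFτ₂
        rw [hFτ₁] at hFτ₂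
        linarith
    refine ⟨hlt, ?_⟩
    -- spacing bound
    have hA : 0 ≤ μ₁ * x₂ / (μ₁ - μM) :=
      div_nonneg (mul_nonneg (h2.trans h1).le hx2) (sub_pos.mpr h1).le
    set A := μ₁ * x₂ / (μ₁ - μM) with hAdef
    -- F τ * exp(μM τ) = C - A * exp((μM - μ₁) τ)
    have hprod : ∀ t : ℝ, Ffun μ₁ μM β x₁ x₂ t * Real.exp (μM * t)
        = (x₁ + β / μM + A) - A * Real.exp ((μM - μ₁) * t) := by
      intro t
      rw [Ffun_eq]
      have e1 : Real.exp (-(μM * t)) * Real.exp (μM * t) = 1 := by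
        rw [← Real.exp_add]; simp
      have e2 : Real.exp (-(μ₁ * t)) * Real.exp (μM * t) = Real.exp ((μM - μ₁) * t) := by
        rw [← Real.exp_add]; ring_nf
      calc ((x₁ + β / μM + A) * Real.exp (-(μM * t)) - A * Real.exp (-(μ₁ * t)))
            * Real.exp (μM * t)
          = (x₁ + β / μM + A) * (Real.exp (-(μM * t)) * Real.exp (μM * t))
            - A * (Real.exp (-(μ₁ * t)) * Real.exp (μM * t)) := by ring
        _ = (x₁ + β / μM + A) - A * Real.exp ((μM - μ₁) * t) := by rw [e1, e2]; ring
    have hmono : A * Real.exp ((μM - μ₁) * τ₁) ≤ A * Real.exp ((μM - μ₁) * τ₂) := by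
      apply mul_le_mul_of_nonneg_left _ hA
      apply Real.exp_le_exp.mpr
      nlinarith
    have hineq : (κ₁ - β / μM) * Real.exp (μM * τ₁) ≤ (κ₂ - β / μM) * Real.exp (μM * τ₂) := by
      have p1 := hprod τ₁
      have p2 := hprod τ₂
      rw [hFτ₁] at p1
      rw [hFτ₂] at p2
      nlinarith
    have hE₁ : 0 < κ₁ - β / μM := by linarith
    have hE₂ : 0 < κ₂ - β / μM := by linarith
    have hexp12 : Real.exp (μM * (τ₁ - τ₂)) ≤ (κ₂ - β / μM) / (κ₁ - β / μM) := by
      rw [le_div_iff₀ hE₁]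
      have hepos : 0 < Real.exp (μM * τ₂) := Real.exp_pos _
      have heq : Real.exp (μM * (τ₁ - τ₂)) * Real.exp (μM * τ₂) = Real.exp (μM * τ₁) := by
        rw [← Real.exp_add]; ring_nf
      rw [← heq] at hineq
      nlinarith [hepos, hineq]
    have hratio_eq : (μM * κ₂ - β) / (μM * κ₁ - β) = (κ₂ - β / μM) / (κ₁ - β / μM) := by
      rw [show μM * κ₂ - β = μM * (κ₂ - β / μM) by field_simp,
          show μM * κ₁ - β = μM * (κ₁ - β / μM) by field_simp,
          mul_div_mul_left _ _ (ne_of_gt h2)]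
    have hlog : μM * (τ₁ - τ₂) ≤ Real.log ((κ₂ - β / μM) / (κ₁ - β / μM)) := by
      rw [Real.le_log_iff_exp_le (by positivity)]
      exact hexp12
    rw [hratio_eq]
    calc τ₁ - τ₂ = 1 / μM * (μM * (τ₁ - τ₂)) := by field_simp
      _ ≤ 1 / μM * Real.log ((κ₂ - β / μM) / (κ₁ - β / μM)) := by
          apply mul_le_mul_of_nonneg_left hlog (by positivity)
end
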